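/- Let G be a connected unimodular locally compact group with Haar measure μ_G, and let A, B ⊆ G be nonempty compact sets with μ_G(A) + μ_G(B) ≥ μ_G(G). Then AB = G. -/

import Mathlib

/-!
A Haar measure of finite total mass lives on a compact group, where the right
invariance of `μ` makes it invariant under inversion as well. If `g ∉ A * B`, then `A` is disjoint
from the closed set `g • B⁻¹`, which has the measure of `B`; so `A ∪ g • B⁻¹` is a closed set of full
measure, hence all of `G`, and `G` splits into two disjoint nonempty closed sets.
-/

open MeasureTheory Set
open scoped Pointwise ENNReal

theorem union_ne_univ_of_isClosed_of_disjoint {X : Type*} [TopologicalSpace X]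
    [PreconnectedSpace X] {s t : Set X} (hs : IsClosed s) (ht : IsClosed t)
    (hs₀ : s.Nonempty) (ht₀ : t.Nonempty) (hst : Disjoint s t) : s ∪ t ≠ univ := by
  intro hcover
  obtain ⟨x, -, hxs, hxt⟩ := isPreconnected_closed_iff.1 isPreconnected_univ s t hs ht
    hcover.ge (by simpa using hs₀) (by simpa using ht₀)
  exact hst.notMem_of_mem_left hxs hxt

namespace MeasureTheory.Measure

variable {G : Type*} [Group G] [TopologicalSpace G] [IsTopologicalGroup G]
  [MeasurableSpace G] [BorelSpace G] (μ : Measure G)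

theorem compactSpace_of_measure_univ_ne_top [WeaklyLocallyCompactSpace G] [IsOpenPosMeasure μ]
    [μ.IsMulLeftInvariant] (hμ : μ univ ≠ ∞) : CompactSpace G := by
  by_contra hG
  have : NoncompactSpace G := not_compactSpace_iff.1 hG
  exact hμ (measure_univ_of_isMulLeftInvariant μ)

/-- Both `μ` and `μ.inv` are Haar measures of the same total mass, and on a compact group Haar
measure is unique up to a scalar. -/
theorem isInvInvariant_of_isMulRightInvariant [LocallyCompactSpace G] [CompactSpace G]
    [μ.IsHaarMeasure] [μ.IsMulRightInvariant] : μ.IsInvInvariant := by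
  have hc : μ.inv = haarScalarFactor μ.inv μ • μ := isMulInvariant_eq_smul_of_compactSpace μ.inv μ
  have huniv : (haarScalarFactor μ.inv μ : ℝ≥0∞) * μ univ = 1 * μ univ := by
    rw [one_mul, ← smul_eq_mul, ← ENNReal.smul_def, ← smul_apply, ← hc, inv_apply, inv_univ]
  rw [ENNReal.mul_left_inj (NeZero.ne _) (measure_ne_top _ _), ENNReal.coe_eq_one] at huniv
  exact ⟨by rw [hc, huniv, one_smul]⟩

theorem mul_eq_univ_of_isClosed_of_measure_add_ge [PreconnectedSpace G] [IsFiniteMeasure μ]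
    [IsOpenPosMeasure μ] [μ.IsMulLeftInvariant] [μ.IsInvInvariant] {A B : Set G}
    (hA : A.Nonempty) (hB : B.Nonempty) (hAc : IsClosed A) (hBc : IsClosed B)
    (h : μ univ ≤ μ A + μ B) : A * B = univ := by
  refine eq_univ_of_forall fun g ↦ of_not_not fun hg ↦ ?_
  set C := g • B⁻¹
  have hCc : IsClosed C := hBc.inv.smul g
  have hAC : Disjoint A C := by
    refine disjoint_left.2 fun a ha ⟨b, hb, hab⟩ ↦ hg ⟨a, ha, b⁻¹, hb, ?_⟩
    simp only [← hab, smul_eq_mul, mul_inv_cancel_right]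
  have hμC : μ C = μ B := by rw [measure_smul, measure_inv]
  have hfull : μ (A ∪ C) = μ univ := by
    refine (measure_mono (subset_univ _)).antisymm ?_
    rwa [measure_union hAC hCc.measurableSet, hμC]
  exact union_ne_univ_of_isClosed_of_disjoint hAc hCc hA hB.inv.smul_set hAC
    ((hAc.union hCc).measure_eq_univ_iff_eq.1 hfull)

end MeasureTheory.Measure

/-- If `G` is a connected unimodular locally compact group with Haar measure `μ`,
and `A`, `B` are nonempty compact subsets with `μ A + μ B ≥ μ G`, then `A * B = G`. -/
theorem product_eq_univ_of_measure_add_ge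
    {G : Type*} [Group G] [TopologicalSpace G] [IsTopologicalGroup G]
    [LocallyCompactSpace G] [T2Space G] [ConnectedSpace G]
    [MeasurableSpace G] [BorelSpace G]
    (μ : Measure G) [μ.IsHaarMeasure] [μ.IsMulRightInvariant]
    {A B : Set G} (hA : A.Nonempty) (hB : B.Nonempty)
    (hAc : IsCompact A) (hBc : IsCompact B)
    (h : μ univ ≤ μ A + μ B) :
    A * B = univ := by
  have hfin : μ univ ≠ ∞ :=
    (h.trans_lt (ENNReal.add_lt_top.2 ⟨hAc.measure_lt_top, hBc.measure_lt_top⟩)).ne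
  have : CompactSpace G := Measure.compactSpace_of_measure_univ_ne_top μ hfin
  have : μ.IsInvInvariant := Measure.isInvInvariant_of_isMulRightInvariant μ
  exact Measure.mul_eq_univ_of_isClosed_of_measure_add_ge μ hA hB hAc.isClosed hBc.isClosed h
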